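/- arXiv:2004.13322 — 7 statements merged into one kernel-verified Lean document; each statement's English description precedes it below -/
import Mathlib

section
/- Let H be a complex Hilbert space, let T be a bounded linear operator on H, and let T = U|T| be its canonical polar decomposition. Then the following are equivalent: (i) T is quasinormal, i.e. T(T*T) = (T*T)T; (ii) λT + (1-λ)|T|U = T for all λ ∈ [0,1]; (iii) λT + (1-λ)|T|U = T for some λ ∈ [0,1). -/
/-!
Writing `T = U R` with `R = |T|`, quasinormality of `T` means that `T` commutes with `R ^ 2`, hence
with `R = √(R ^ 2)`, i.e. `U R R = R U R`. So `U R - R U` vanishes on the range of `R`, and also on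
`ker R = ker T = ker U`; since `R` is self-adjoint these two subspaces span `H`, so `U R = R U`,
i.e. the Duggal transform `R U` equals `T`. Conversely `R U = U R` makes `T` commute with `R`.
Finally `λ T + (1 - λ) R U = T` is equivalent to `R U = T` as soon as `λ ≠ 1`.
-/

open ContinuousLinearMap

theorem Commute.of_mul_self_right {A : Type*} [CStarAlgebra A] [PartialOrder A] [StarOrderedRing A]
    {a b : A} (hb : 0 ≤ b) (h : Commute a (b * b)) : Commute a b := by
  rw [← CFC.sqrt_mul_self b hb]
  exact (h.symm.cfcₙ_nnreal _).symm

theorem smul_add_one_sub_smul_eq_self_iff {k M : Type*} [Field k] [AddCommGroup M] [Module k M]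
    {l : k} (hl : l ≠ 1) {x y : M} :
    l • x + (1 - l) • y = x ↔ y = x := by
  rw [← sub_eq_zero, show l • x + (1 - l) • y - x = (1 - l) • (y - x) by module, smul_eq_zero,
    sub_eq_zero, sub_eq_zero, or_iff_right (Ne.symm hl)]

namespace ContinuousLinearMap

variable {𝕜 E F G : Type*} [RCLike 𝕜] [NormedAddCommGroup E] [InnerProductSpace 𝕜 E]
  [CompleteSpace E] [NormedAddCommGroup F] [InnerProductSpace 𝕜 F] [CompleteSpace F]
  [NormedAddCommGroup G] [InnerProductSpace 𝕜 G]

theorem ker_eq_of_comp_self_eq_adjoint_comp_self {R : E →L[𝕜] E} {T : E →L[𝕜] F}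
    (hR : IsSelfAdjoint R) (h : R ∘L R = adjoint T ∘L T) : R.ker = T.ker := by
  rw [← ker_adjoint_comp_self R, ← ker_adjoint_comp_self T, ← h, hR.adjoint_eq]

theorem eq_zero_of_ker_le_of_comp_adjoint_eq_zero {A : E →L[𝕜] F} {D : E →L[𝕜] G}
    (hker : A.ker ≤ D.ker) (h : D ∘L adjoint A = 0) : D = 0 := by
  have hrange : (adjoint A).range ≤ D.ker := by
    rintro _ ⟨y, rfl⟩
    exact congr($h y)
  have horth : A.kerᗮ ≤ D.ker := by
    rw [orthogonal_ker]
    exact Submodule.topologicalClosure_minimal _ hrange D.isClosed_ker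
  have htop : ⊤ ≤ D.ker := by
    rw [← Submodule.sup_orthogonal_of_hasOrthogonalProjection (K := A.ker)]
    exact sup_le hker horth
  ext x
  exact htop trivial

theorem commute_adjoint_mul_self_iff_mul_eq {H : Type*} [NormedAddCommGroup H]
    [InnerProductSpace ℂ H] [CompleteSpace H] {T U R : H →L[ℂ] H} (hRpos : R.IsPositive)
    (hRsq : R * R = adjoint T * T) (hker : U.ker = T.ker) (hTUR : T = U * R) :
    Commute T (adjoint T * T) ↔ R * U = T := by
  have hRsa : IsSelfAdjoint R := hRpos.isSelfAdjoint
  have hkerR : R.ker = U.ker := hker ▸ ker_eq_of_comp_self_eq_adjoint_comp_self hRsa hRsq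
  constructor
  · intro hT
    have hTR : Commute T R :=
      (hRsq ▸ hT).of_mul_self_right ((nonneg_iff_isPositive R).mpr hRpos)
    have hcomp : (U * R - R * U) ∘L adjoint R = 0 := by
      rw [hRsa.adjoint_eq, ← mul_def, sub_mul, ← hTUR, mul_assoc, ← hTUR, hTR.eq, sub_self]
    have hkerle : R.ker ≤ (U * R - R * U).ker := fun x hx => by
      have hUx : x ∈ U.ker := hkerR ▸ hx
      simp [LinearMap.mem_ker.mp hx, LinearMap.mem_ker.mp hUx]
    rw [hTUR, ← sub_eq_zero.mp (eq_zero_of_ker_le_of_comp_adjoint_eq_zero hkerle hcomp)]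
  · intro hRU
    have hUR : Commute U R := (hRU.trans hTUR).symm
    have hTR : Commute T R := hTUR ▸ hUR.mul_left (.refl R)
    rw [← hRsq]
    exact hTR.mul_right hTR

end ContinuousLinearMap

theorem stmt0_general {H : Type*} [NormedAddCommGroup H] [InnerProductSpace ℂ H] [CompleteSpace H]
    (T U R : H →L[ℂ] H)
    (hRpos : R.IsPositive) (hRsq : R * R = adjoint T * T)
    (hker : LinearMap.ker (U : H →ₗ[ℂ] H) = LinearMap.ker (T : H →ₗ[ℂ] H))
    (hTUR : T = U * R) :
    List.TFAE
      [T * (adjoint T * T) = (adjoint T * T) * T,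
       ∀ l : ℝ, l ∈ Set.Icc (0 : ℝ) 1 → (l : ℂ) • T + ((1 : ℂ) - (l : ℂ)) • (R * U) = T,
       ∃ l : ℝ, l ∈ Set.Ico (0 : ℝ) 1 ∧ (l : ℂ) • T + ((1 : ℂ) - (l : ℂ)) • (R * U) = T] := by
  have hiff := commute_adjoint_mul_self_iff_mul_eq hRpos hRsq hker hTUR
  tfae_have 1 → 2 := fun hT l _ => by
    rw [hiff.mp hT, ← add_smul, add_sub_cancel, one_smul]
  tfae_have 2 → 3 := fun h => ⟨0, ⟨le_rfl, one_pos⟩, h 0 ⟨le_rfl, zero_le_one⟩⟩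
  tfae_have 3 → 1 := fun ⟨l, ⟨_, hl⟩, h⟩ =>
    hiff.mpr ((smul_add_one_sub_smul_eq_self_iff (by exact_mod_cast hl.ne)).mp h)
  tfae_finish

/-- The λ-mean transform equals `T` iff `T` is quasinormal. -/
theorem stmt0 {H : Type*} [NormedAddCommGroup H] [InnerProductSpace ℂ H] [CompleteSpace H]
    (T U R : H →L[ℂ] H)
    (hRpos : R.IsPositive) (hRsq : R * R = adjoint T * T)
    (hUpar : U * adjoint U * U = U)
    (hker : LinearMap.ker (U : H →ₗ[ℂ] H) = LinearMap.ker (T : H →ₗ[ℂ] H))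
    (hTUR : T = U * R) :
    List.TFAE
      [T * (adjoint T * T) = (adjoint T * T) * T,
       ∀ l : ℝ, l ∈ Set.Icc (0 : ℝ) 1 → (l : ℂ) • T + ((1 : ℂ) - (l : ℂ)) • (R * U) = T,
       ∃ l : ℝ, l ∈ Set.Ico (0 : ℝ) 1 ∧ (l : ℂ) • T + ((1 : ℂ) - (l : ℂ)) • (R * U) = T] :=
  stmt0_general T U R hRpos hRsq hker hTUR
end

section
/- Let H be a complex Hilbert space, let T be a bounded linear operator on H, and let T = U|T| be its canonical polar decomposition. Then the following are equivalent: (i) T is quasinormal, i.e. T(T*T) = (T*T)T; (ii) λT + (1-λ)|T|U = |T|U for all λ ∈ [0,1]; (iii) λT + (1-λ)|T|U = |T|U for some λ ∈ (0,1]. -/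
/-!
Quasinormality says that `T` commutes with `T*T = |T|²`, hence (functional calculus) with `|T|`.
Then `(U|T| - |T|U)|T| = 0`, so `U|T| - |T|U` vanishes on the closure of the range of `|T|`,
which is `(ker |T|)ᗮ`, and also on `ker |T| = ker T = ker U`; thus `U` commutes with `|T|`, that
is `T = T^D`. Conversely `T = T^D` makes `U` commute with `|T|`, hence `T` with `|T|²`.
Finally, for `λ ≠ 0` the identity `λT + (1-λ)T^D = T^D` is just `λ(T - T^D) = 0`.
-/

open ContinuousLinearMap

lemma Commute.of_mul_self_left {A : Type*} [NonUnitalRing A] [StarRing A] [Module ℝ A]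
    [IsScalarTower ℝ A A] [SMulCommClass ℝ A A] [TopologicalSpace A]
    [NonUnitalContinuousFunctionalCalculus ℝ A IsSelfAdjoint] [IsTopologicalRing A] [T2Space A]
    [PartialOrder A] [NonnegSpectrumClass ℝ A] [StarOrderedRing A] {a b : A} (ha : 0 ≤ a)
    (h : Commute (a * a) b) : Commute a b := by
  have h' : Commute (CFC.sqrt (a * a)) b := h.cfcₙ_nnreal NNReal.sqrt
  rwa [CFC.sqrt_mul_self a ha] at h'

section

variable {𝕜 E F : Type*} [RCLike 𝕜] [NormedAddCommGroup E] [InnerProductSpace 𝕜 E]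
  [CompleteSpace E] [NormedAddCommGroup F] [InnerProductSpace 𝕜 F]

lemma ContinuousLinearMap.ker_eq_ker_of_adjoint_comp_self_eq {G : Type*} [NormedAddCommGroup G]
    [InnerProductSpace 𝕜 G] [CompleteSpace F] [CompleteSpace G] {S : E →L[𝕜] F} {T : E →L[𝕜] G}
    (h : adjoint S ∘L S = adjoint T ∘L T) :
    LinearMap.ker (S : E →ₗ[𝕜] F) = LinearMap.ker (T : E →ₗ[𝕜] G) := by
  rw [← ker_adjoint_comp_self S, h, ker_adjoint_comp_self]

lemma IsSelfAdjoint.eq_zero_of_comp_eq_zero {R : E →L[𝕜] E} (hR : IsSelfAdjoint R) {D : E →L[𝕜] F}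
    (hDR : D ∘L R = 0) (hker : LinearMap.ker (R : E →ₗ[𝕜] E) ≤ LinearMap.ker (D : E →ₗ[𝕜] F)) :
    D = 0 := by
  have hrange : LinearMap.range (R : E →ₗ[𝕜] E) ≤ LinearMap.ker (D : E →ₗ[𝕜] F) := by
    rintro _ ⟨x, rfl⟩
    exact congr($hDR x)
  have horth : (LinearMap.ker (R : E →ₗ[𝕜] E))ᗮ ≤ LinearMap.ker (D : E →ₗ[𝕜] F) := by
    rw [orthogonal_ker, hR.adjoint_eq]
    exact Submodule.topologicalClosure_minimal _ hrange (isClosed_ker D)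
  have : CompleteSpace (LinearMap.ker (R : E →ₗ[𝕜] E)) := (isClosed_ker R).completeSpace_coe
  have htop : ⊤ ≤ LinearMap.ker (D : E →ₗ[𝕜] F) :=
    (LinearMap.ker (R : E →ₗ[𝕜] E)).sup_orthogonal_of_hasOrthogonalProjection ▸ sup_le hker horth
  ext x
  exact htop Submodule.mem_top

end

lemma smul_add_one_sub_smul_eq_iff {K M : Type*} [Field K] [AddCommGroup M] [Module K M]
    {c : K} (hc : c ≠ 0) {x y : M} : c • x + (1 - c) • y = y ↔ x = y := by
  rw [← sub_eq_zero, ← sub_eq_zero (a := x)]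
  have : c • x + (1 - c) • y - y = c • (x - y) := by module
  rw [this, smul_eq_zero, or_iff_right hc]

lemma commute_adjoint_mul_self_iff_commute {H : Type*} [NormedAddCommGroup H]
    [InnerProductSpace ℂ H] [CompleteSpace H] {T U R : H →L[ℂ] H} (hRpos : R.IsPositive)
    (hRsq : R * R = adjoint T * T)
    (hker : LinearMap.ker (T : H →ₗ[ℂ] H) ≤ LinearMap.ker (U : H →ₗ[ℂ] H)) (hTUR : T = U * R) :
    Commute T (adjoint T * T) ↔ Commute U R := by
  refine ⟨fun hq => ?_, fun h => ?_⟩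
  · have hR : IsSelfAdjoint R := hRpos.isSelfAdjoint
    have hRT : Commute R T :=
      .of_mul_self_left ((nonneg_iff_isPositive R).mpr hRpos) (hRsq ▸ hq.symm)
    have hkerR : LinearMap.ker (R : H →ₗ[ℂ] H) = LinearMap.ker (T : H →ₗ[ℂ] H) := by
      apply ker_eq_ker_of_adjoint_comp_self_eq
      rw [hR.adjoint_eq]
      exact hRsq
    have hD : (U * R - R * U) ∘L R = 0 := by
      change (U * R - R * U) * R = 0
      rw [sub_mul, mul_assoc R, ← hTUR, ← hRT.eq, hTUR, sub_self]
    rw [commute_iff_eq, ← sub_eq_zero]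
    refine hR.eq_zero_of_comp_eq_zero hD fun x hx => ?_
    have hUx : U x = 0 := hker (hkerR ▸ hx)
    simp [LinearMap.mem_ker.mp hx, hUx]
  · rw [← hRsq, hTUR]
    exact (h.mul_right h).mul_left ((Commute.refl R).mul_right (.refl R))

theorem stmt1_general {H : Type*} [NormedAddCommGroup H] [InnerProductSpace ℂ H] [CompleteSpace H]
    (T U R : H →L[ℂ] H)
    (hRpos : R.IsPositive) (hRsq : R * R = adjoint T * T)
    (hker : LinearMap.ker (U : H →ₗ[ℂ] H) = LinearMap.ker (T : H →ₗ[ℂ] H))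
    (hTUR : T = U * R) :
    List.TFAE
      [T * (adjoint T * T) = (adjoint T * T) * T,
       ∀ l : ℝ, l ∈ Set.Icc (0 : ℝ) 1 → (l : ℂ) • T + ((1 : ℂ) - (l : ℂ)) • (R * U) = R * U,
       ∃ l : ℝ, l ∈ Set.Ioc (0 : ℝ) 1 ∧ (l : ℂ) • T + ((1 : ℂ) - (l : ℂ)) • (R * U) = R * U] := by
  have hquasi : T * (adjoint T * T) = (adjoint T * T) * T ↔ T = R * U := by
    rw [← commute_iff_eq, commute_adjoint_mul_self_iff_commute hRpos hRsq hker.ge hTUR, hTUR]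
    rfl
  have hmean {l : ℝ} (hl : 0 < l) :
      (l : ℂ) • T + ((1 : ℂ) - (l : ℂ)) • (R * U) = R * U ↔ T = R * U :=
    smul_add_one_sub_smul_eq_iff (by exact_mod_cast hl.ne')
  tfae_have 1 → 2 := fun h l _ => by
    rw [hquasi.mp h, ← add_smul, add_sub_cancel, one_smul]
  tfae_have 2 → 3 := fun h => ⟨1, ⟨one_pos, le_rfl⟩, h 1 ⟨zero_le_one, le_rfl⟩⟩
  tfae_have 3 → 1 := fun ⟨l, hl, h⟩ => hquasi.mpr ((hmean hl.1).mp h)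
  tfae_finish

/-- The λ-mean transform equals the Duggal transform `T^D = |T|U` iff `T` is quasinormal. -/
theorem stmt1 {H : Type*} [NormedAddCommGroup H] [InnerProductSpace ℂ H] [CompleteSpace H]
    (T U R : H →L[ℂ] H)
    (hRpos : R.IsPositive) (hRsq : R * R = adjoint T * T)
    (hUpar : U * adjoint U * U = U)
    (hker : LinearMap.ker (U : H →ₗ[ℂ] H) = LinearMap.ker (T : H →ₗ[ℂ] H))
    (hTUR : T = U * R) :
    List.TFAE
      [T * (adjoint T * T) = (adjoint T * T) * T,
       ∀ l : ℝ, l ∈ Set.Icc (0 : ℝ) 1 → (l : ℂ) • T + ((1 : ℂ) - (l : ℂ)) • (R * U) = R * U,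
       ∃ l : ℝ, l ∈ Set.Ioc (0 : ℝ) 1 ∧ (l : ℂ) • T + ((1 : ℂ) - (l : ℂ)) • (R * U) = R * U] :=
  stmt1_general T U R hRpos hRsq hker hTUR
end

section
/- Let α = (α_n)_{n≥0} be a bounded sequence of positive real numbers, let λ ∈ [0,1), and for each m ≥ 0 let W^{(m)} be the unilateral weighted shift on ℓ²(ℤ≥0) with weight sequence α^{(m)}_n = Σ_{i=0}^{m} C(m,i) λ^{m-i} (1-λ)^i α_{n+i} (this is the m-th iterated λ-mean transform M^{(m)}_λ(W_α) of W_α). Then: (i) if α is monotone decreasing, W^{(m)} converges in operator norm, as m → ∞, to (inf_{n≥0} α_n) times the unweighted unilateral shift; (ii) if α is monotone increasing, W^{(m)} converges in operator norm to (sup_{n≥0} α_n) times the unweighted unilateral shift. -/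
/-!
`W m - L • S` is again a weighted shift, whose `n`-th weight is `∑ᵢ b m i * (α (n + i) - L)`
with the binomial weights `b m i = C(m, i) l ^ (m - i) (1 - l) ^ i`, a probability distribution
on `{0, …, m}`. Monotonicity of `α` gives `|α (n + i) - L| ≤ γ i := |α i - L|` uniformly in `n`,
so `‖W m - L • S‖ ≤ ∑ᵢ b m i * γ i`. As `l < 1`, the mass `b m i` of each fixed `i` tends to `0`,
while `γ i → 0`; hence these averages tend to `0`, as for Cesàro means.
-/

open Filter Finset Topology

section WeightedShift

variable {𝕜 : Type*} [NontriviallyNormedField 𝕜] {p : ENNReal} [Fact (1 ≤ p)]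

def IsWeightedShift (T : lp (fun _ : ℕ => 𝕜) p →L[𝕜] lp (fun _ : ℕ => 𝕜) p) (c : ℕ → 𝕜) :
    Prop :=
  ∀ n, T (lp.single p n 1) = c n • lp.single p (n + 1) 1

namespace IsWeightedShift

variable {T S : lp (fun _ : ℕ => 𝕜) p →L[𝕜] lp (fun _ : ℕ => 𝕜) p} {c d : ℕ → 𝕜}

lemma sub_smul (hT : IsWeightedShift T c) (hS : IsWeightedShift S d) (a : 𝕜) :
    IsWeightedShift (T - a • S) (c - a • d) := fun n => by
  simp [hT n, hS n, _root_.sub_smul, mul_smul]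

lemma hasSum (hT : IsWeightedShift T c) (hp : p ≠ ⊤) (x : lp (fun _ : ℕ => 𝕜) p) :
    HasSum (fun n => (x n * c n) • lp.single p (n + 1) 1) (T x) := by
  have h_single (n : ℕ) : T (lp.single p n (x n)) = (x n * c n) • lp.single p (n + 1) 1 := by
    rw [← smul_smul, ← hT n, ← map_smul, ← lp.single_smul, smul_eq_mul, mul_one]
  simpa only [h_single] using (lp.hasSum_single hp x).mapL T

lemma hasSum_apply (hT : IsWeightedShift T c) (hp : p ≠ ⊤) (x : lp (fun _ : ℕ => 𝕜) p) (k : ℕ) :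
    HasSum (fun n => x n * c n * (Pi.single (n + 1) (1 : 𝕜) : ℕ → 𝕜) k) (T x k) :=
  (hT.hasSum hp x).mapL (lp.evalCLM 𝕜 _ p k)

lemma apply_zero (hT : IsWeightedShift T c) (hp : p ≠ ⊤) (x : lp (fun _ : ℕ => 𝕜) p) :
    T x 0 = 0 :=
  (hT.hasSum_apply hp x 0).unique (by simp)

lemma apply_succ (hT : IsWeightedShift T c) (hp : p ≠ ⊤) (x : lp (fun _ : ℕ => 𝕜) p) (n : ℕ) :
    T x (n + 1) = x n * c n := by
  simpa using (hT.hasSum_apply hp x (n + 1)).unique (hasSum_single n fun k hk => by simp [hk])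

lemma norm_le (hT : IsWeightedShift T c) (hp : p ≠ ⊤) {K : ℝ} (hK : 0 ≤ K)
    (hc : ∀ n, ‖c n‖ ≤ K) : ‖T‖ ≤ K := by
  have hr : 0 < p.toReal := ENNReal.toReal_pos (zero_lt_one.trans_le Fact.out).ne' hp
  refine T.opNorm_le_bound hK fun x => lp.norm_le_of_forall_sum_le hr (by positivity) fun s => ?_
  set N := s.sup id
  calc ∑ k ∈ s, ‖T x k‖ ^ p.toReal
      ≤ ∑ k ∈ range (N + 1), ‖T x k‖ ^ p.toReal :=
        sum_le_sum_of_subset_of_nonneg (subset_range_sup_succ s) fun _ _ _ => by positivity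
    _ = ∑ n ∈ range N, ‖x n * c n‖ ^ p.toReal := by
        simp [sum_range_succ', hT.apply_zero hp, hT.apply_succ hp, Real.zero_rpow hr.ne']
    _ ≤ ∑ n ∈ range N, K ^ p.toReal * ‖x n‖ ^ p.toReal := by
        refine sum_le_sum fun n _ => ?_
        rw [← Real.mul_rpow hK (norm_nonneg _), norm_mul, mul_comm]
        gcongr
        exact hc n
    _ ≤ K ^ p.toReal * ‖x‖ ^ p.toReal := by
        rw [← mul_sum]
        gcongr
        exact lp.sum_rpow_le_norm_rpow hr x _
    _ = (K * ‖x‖) ^ p.toReal := (Real.mul_rpow hK (norm_nonneg _)).symm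

end IsWeightedShift

end WeightedShift

theorem tendsto_sum_mul_of_tendsto_zero {w : ℕ → ℕ → ℝ} {γ : ℕ → ℝ}
    (hw_nonneg : ∀ m i, 0 ≤ w m i) (hw_sum : ∀ m, ∑ i ∈ range (m + 1), w m i ≤ 1)
    (hw : ∀ i, Tendsto (fun m => w m i) atTop (𝓝 0)) (hγ : Tendsto γ atTop (𝓝 0)) :
    Tendsto (fun m => ∑ i ∈ range (m + 1), w m i * γ i) atTop (𝓝 0) := by
  rw [Metric.tendsto_nhds]
  intro ε hε
  obtain ⟨N, hN⟩ : ∃ N, ∀ i ≥ N, |γ i| < ε / 2 := by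
    simpa [Real.dist_eq] using Metric.tendsto_atTop.1 hγ (ε / 2) (half_pos hε)
  have h_head : Tendsto (fun m => ∑ i ∈ range N, w m i * |γ i|) atTop (𝓝 0) := by
    simpa using tendsto_finsetSum _ fun i _ => (hw i).mul_const |γ i|
  filter_upwards [h_head.eventually (gt_mem_nhds (half_pos hε)), eventually_ge_atTop N]
    with m h_small hm
  have h_tail : ∑ i ∈ Ico N (m + 1), w m i * |γ i| ≤ ε / 2 := calc
    _ ≤ ∑ i ∈ Ico N (m + 1), w m i * (ε / 2) :=
      sum_le_sum fun i hi => mul_le_mul_of_nonneg_left (hN i (mem_Ico.1 hi).1).le (hw_nonneg m i)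
    _ ≤ ∑ i ∈ range (m + 1), w m i * (ε / 2) :=
      sum_le_sum_of_subset_of_nonneg (fun i hi => mem_range.2 (mem_Ico.1 hi).2)
        fun i _ _ => mul_nonneg (hw_nonneg m i) (half_pos hε).le
    _ ≤ ε / 2 := by rw [← sum_mul]; exact mul_le_of_le_one_left (half_pos hε).le (hw_sum m)
  calc dist (∑ i ∈ range (m + 1), w m i * γ i) 0
      ≤ ∑ i ∈ range (m + 1), w m i * |γ i| := by
        simpa [Real.dist_eq, abs_mul, abs_of_nonneg (hw_nonneg m _)] using
          abs_sum_le_sum_abs (fun i => w m i * γ i) (range (m + 1))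
    _ = ∑ i ∈ range N, w m i * |γ i| + ∑ i ∈ Ico N (m + 1), w m i * |γ i| :=
        (sum_range_add_sum_Ico _ (by omega)).symm
    _ < ε := by linarith

def binomWeight (l : ℝ) (m i : ℕ) : ℝ := m.choose i * l ^ (m - i) * (1 - l) ^ i

lemma binomWeight_nonneg {l : ℝ} (hl : l ∈ Set.Icc (0 : ℝ) 1) (m i : ℕ) :
    0 ≤ binomWeight l m i := by
  have h₀ : 0 ≤ l := hl.1
  have h₁ : 0 ≤ 1 - l := sub_nonneg.2 hl.2
  unfold binomWeight
  positivity

lemma sum_binomWeight (l : ℝ) (m : ℕ) : ∑ i ∈ range (m + 1), binomWeight l m i = 1 := by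
  have h := add_pow (1 - l) l m
  rw [sub_add_cancel, one_pow] at h
  rw [h]
  exact sum_congr rfl fun i _ => by unfold binomWeight; ring

lemma tendsto_binomWeight {l : ℝ} (hl : l ∈ Set.Ico (0 : ℝ) 1) (i : ℕ) :
    Tendsto (fun m => binomWeight l m i) atTop (𝓝 0) := by
  rcases hl.1.eq_or_lt with rfl | hl0
  · refine tendsto_const_nhds.congr' ?_
    filter_upwards [eventually_gt_atTop i] with m hm
    simp [binomWeight, zero_pow (Nat.sub_ne_zero_of_lt hm)]
  have h_lim := (tendsto_pow_const_mul_const_pow_of_lt_one i hl0.le hl.2).mul_const (l ^ i)⁻¹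
  rw [zero_mul] at h_lim
  have hl' := Set.Ico_subset_Icc_self hl
  refine squeeze_zero' (.of_forall fun m => binomWeight_nonneg hl' m i) ?_ h_lim
  filter_upwards [eventually_ge_atTop i] with m hm
  calc binomWeight l m i ≤ (m : ℝ) ^ i * l ^ (m - i) * 1 := by
        have hq : 0 ≤ 1 - l := sub_nonneg.2 hl.2.le
        unfold binomWeight
        gcongr
        · exact_mod_cast Nat.choose_le_pow m i
        · exact pow_le_one₀ hq (by linarith)
    _ = (m : ℝ) ^ i * l ^ m * (l ^ i)⁻¹ := by rw [pow_sub₀ _ hl0.ne' hm]; ring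

lemma abs_sum_binomWeight_mul_sub_le {l : ℝ} (hl : l ∈ Set.Icc (0 : ℝ) 1) (m : ℕ)
    {a γ : ℕ → ℝ} {L : ℝ} (h : ∀ i, |a i - L| ≤ γ i) :
    |∑ i ∈ range (m + 1), binomWeight l m i * a i - L| ≤
      ∑ i ∈ range (m + 1), binomWeight l m i * γ i := calc
  _ = |∑ i ∈ range (m + 1), binomWeight l m i * (a i - L)| := by
      simp [mul_sub, sum_sub_distrib, ← sum_mul, sum_binomWeight]
  _ ≤ ∑ i ∈ range (m + 1), |binomWeight l m i * (a i - L)| := abs_sum_le_sum_abs _ _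
  _ ≤ ∑ i ∈ range (m + 1), binomWeight l m i * γ i := sum_le_sum fun i _ => by
      rw [abs_mul, abs_of_nonneg (binomWeight_nonneg hl m i)]
      exact mul_le_mul_of_nonneg_left (h i) (binomWeight_nonneg hl m i)

theorem tendsto_of_isWeightedShift_binomWeight {𝕜 : Type*} [RCLike 𝕜] {p : ENNReal}
    [Fact (1 ≤ p)] (hp : p ≠ ⊤) {α : ℕ → ℝ} {l : ℝ} (hl : l ∈ Set.Ico (0 : ℝ) 1)
    {W : ℕ → (lp (fun _ : ℕ => 𝕜) p →L[𝕜] lp (fun _ : ℕ => 𝕜) p)}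
    {S : lp (fun _ : ℕ => 𝕜) p →L[𝕜] lp (fun _ : ℕ => 𝕜) p}
    (hW : ∀ m, IsWeightedShift (W m)
      fun n => ((∑ i ∈ range (m + 1), binomWeight l m i * α (n + i) : ℝ) : 𝕜))
    (hS : IsWeightedShift S 1) {L : ℝ} {γ : ℕ → ℝ} (hαγ : ∀ n i, |α (n + i) - L| ≤ γ i)
    (hγ : Tendsto γ atTop (𝓝 0)) :
    Tendsto W atTop (𝓝 ((L : 𝕜) • S)) := by
  have hl' := Set.Ico_subset_Icc_self hl
  rw [tendsto_iff_norm_sub_tendsto_zero]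
  refine squeeze_zero (fun m => norm_nonneg _) (fun m => ?_)
    (tendsto_sum_mul_of_tendsto_zero (binomWeight_nonneg hl') (fun m => (sum_binomWeight l m).le)
      (tendsto_binomWeight hl) hγ)
  refine ((hW m).sub_smul hS L).norm_le hp
    (sum_nonneg fun i _ => mul_nonneg (binomWeight_nonneg hl' m i) ((abs_nonneg _).trans (hαγ 0 i)))
    fun n => ?_
  show ‖((_ : ℝ) : 𝕜) - (L : 𝕜) • (1 : 𝕜)‖ ≤ _
  rw [smul_eq_mul, mul_one, ← RCLike.ofReal_sub, RCLike.norm_ofReal]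
  exact abs_sum_binomWeight_mul_sub_le hl' m (hαγ n)

/-- The iterated λ-mean transforms of a unilateral weighted shift with monotone weights
converge in operator norm to a multiple of the unweighted unilateral shift. -/
theorem stmt3 (α : ℕ → ℝ) (hpos : ∀ n, 0 < α n) (hbdd : BddAbove (Set.range α))
    (l : ℝ) (hl : l ∈ Set.Ico (0 : ℝ) 1)
    (W : ℕ → (lp (fun _ : ℕ => ℂ) 2 →L[ℂ] lp (fun _ : ℕ => ℂ) 2))
    (hW : ∀ m n : ℕ, W m (lp.single 2 n (1 : ℂ)) =
      ((∑ i ∈ Finset.range (m + 1),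
          (m.choose i : ℝ) * l ^ (m - i) * (1 - l) ^ i * α (n + i) : ℝ) : ℂ) •
        lp.single 2 (n + 1) (1 : ℂ))
    (S : lp (fun _ : ℕ => ℂ) 2 →L[ℂ] lp (fun _ : ℕ => ℂ) 2)
    (hS : ∀ n : ℕ, S (lp.single 2 n (1 : ℂ)) = lp.single 2 (n + 1) (1 : ℂ)) :
    (Antitone α → Tendsto W atTop (nhds (((⨅ n, α n : ℝ) : ℂ) • S))) ∧
    (Monotone α → Tendsto W atTop (nhds (((⨆ n, α n : ℝ) : ℂ) • S))) := by
  have hW' (m : ℕ) : IsWeightedShift (W m)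
      fun n => ((∑ i ∈ range (m + 1), binomWeight l m i * α (n + i) : ℝ) : ℂ) := hW m
  have hS' : IsWeightedShift S 1 := fun n => by simp [hS n]
  constructor
  · intro hanti
    have hbdd' : BddBelow (Set.range α) := ⟨0, by rintro _ ⟨n, rfl⟩; exact (hpos n).le⟩
    refine tendsto_of_isWeightedShift_binomWeight ENNReal.ofNat_ne_top hl hW' hS'
      (L := ⨅ n, α n) (γ := fun i => α i - ⨅ n, α n) (fun n i => ?_) ?_
    · have := ciInf_le hbdd' (n + i)
      have := hanti (Nat.le_add_left i n)
      rw [abs_of_nonneg] <;> linarith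
    · simpa using (tendsto_atTop_ciInf hanti hbdd').sub_const (⨅ n, α n)
  · intro hmono
    refine tendsto_of_isWeightedShift_binomWeight ENNReal.ofNat_ne_top hl hW' hS'
      (L := ⨆ n, α n) (γ := fun i => (⨆ n, α n) - α i) (fun n i => ?_) ?_
    · have := le_ciSup hbdd (n + i)
      have := hmono (Nat.le_add_left i n)
      rw [abs_of_nonpos] <;> linarith
    · simpa using (tendsto_atTop_ciSup hmono hbdd).const_sub (⨆ n, α n)
end

section
/- Let H be a complex Hilbert space, let T be a bounded linear operator on H with canonical polar decomposition T = U|T|, and let T^D = |T|U be its Duggal transform. Then for every complex number γ, ‖T^D - γI‖ ≤ ‖T - γI‖. In particular, ‖T^D‖ ≤ ‖T‖. -/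
open ContinuousLinearMap
open scoped InnerProductSpace

/-!
Put `P = U*U` and `Q = 1 - P`, the projection onto `ker U = ker T`. Since `TQ = 0` and
`R² = T*T`, the C*-identity gives `RQ = 0`, and then
`RU - γ = P (U*(T - γ)U) P + Q (T - γ) Q`. The two summands live on the orthogonal ranges of
`P` and `Q`, so the norm of their sum is at most the larger of their norms, and each is at most
`‖T - γ‖` because `‖U‖ ≤ 1`.
-/

def IsPartialIsometry {A : Type*} [Mul A] [Star A] (u : A) : Prop :=
  u * star u * u = u

namespace IsPartialIsometry

variable {A : Type*} {u : A}

theorem star [Monoid A] [StarMul A] (hu : IsPartialIsometry u) :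
    IsPartialIsometry (star u) := by
  simpa [IsPartialIsometry, star_mul, mul_assoc] using congr_arg Star.star hu

theorem isStarProjection_star_mul_self [Monoid A] [StarMul A] (hu : IsPartialIsometry u) :
    IsStarProjection (Star.star u * u) where
  isIdempotentElem := by
    rw [IsIdempotentElem, mul_assoc, ← mul_assoc u, hu]
  isSelfAdjoint := .star_mul_self u

theorem mul_one_sub_star_mul_self [Ring A] [StarMul A] (hu : IsPartialIsometry u) :
    u * (1 - Star.star u * u) = 0 := by
  rw [mul_sub, mul_one, ← mul_assoc, hu, sub_self]

theorem norm_le_one [NormedRing A] [StarRing A] [CStarRing A] (hu : IsPartialIsometry u) :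
    ‖u‖ ≤ 1 := by
  have h := hu.isStarProjection_star_mul_self.norm_le
  rw [CStarRing.norm_star_mul_self] at h
  nlinarith [norm_nonneg u]

theorem norm_star_mul_mul_le [NormedRing A] [StarRing A] [CStarRing A]
    (hu : IsPartialIsometry u) (d : A) : ‖Star.star u * d * u‖ ≤ ‖d‖ :=
  calc ‖Star.star u * d * u‖ ≤ ‖Star.star u‖ * ‖d‖ * ‖u‖ := norm_mul₃_le
    _ ≤ 1 * ‖d‖ * 1 := by
      gcongr
      · rw [norm_star]; exact hu.norm_le_one
      · exact hu.norm_le_one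
    _ = ‖d‖ := by ring

theorem mul_sub_smul_one_eq_pinching {K : Type*} [CommRing K] [Ring A] [StarRing A]
    [Algebra K A] {r : A} (hu : IsPartialIsometry u) (hrq : r * (1 - Star.star u * u) = 0)
    (hqr : (1 - Star.star u * u) * r = 0) (γ : K) :
    r * u - γ • 1 = Star.star u * u * (Star.star u * (u * r - γ • 1) * u) * (Star.star u * u)
      + (1 - Star.star u * u) * (u * r - γ • 1) * (1 - Star.star u * u) := by
  have hpr : Star.star u * u * r = r := by
    rwa [sub_mul, one_mul, sub_eq_zero, eq_comm] at hqr
  have hcompress : Star.star u * u * (Star.star u * (u * r - γ • 1) * u) * (Star.star u * u)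
      = Star.star u * (u * r - γ • 1) * u := by
    have hu' : Star.star u * u * Star.star u = Star.star u := by
      simpa [IsPartialIsometry] using hu.star
    calc _ = (Star.star u * u * Star.star u) * (u * r - γ • 1) * (u * Star.star u * u) := by
          simp only [mul_assoc]
      _ = _ := by rw [hu, hu']
  have hcorner : (1 - Star.star u * u) * (u * r - γ • 1) * (1 - Star.star u * u)
      = -γ • (1 - Star.star u * u) := by
    have hqq := hu.isStarProjection_star_mul_self.one_sub.isIdempotentElem.eq
    generalize 1 - Star.star u * u = q at hrq hqq ⊢
    rw [mul_sub, mul_smul_comm, mul_one, sub_mul, smul_mul_assoc, hqq, mul_assoc, mul_assoc, hrq,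
      mul_zero, mul_zero, zero_sub, neg_smul]
  rw [hcompress, hcorner, mul_sub, sub_mul, ← mul_assoc, hpr, mul_smul_comm, smul_mul_assoc,
    mul_one]
  module

end IsPartialIsometry

theorem CStarRing.mul_eq_zero_of_star_mul_self_eq {A : Type*} [NonUnitalNormedRing A]
    [StarRing A] [CStarRing A] {a b q : A} (hab : star a * a = star b * b) (hbq : b * q = 0) :
    a * q = 0 := by
  rw [← CStarRing.star_mul_self_eq_zero_iff]
  calc star (a * q) * (a * q) = star q * (star a * a) * q := by simp only [star_mul, mul_assoc]
    _ = star (b * q) * (b * q) := by rw [hab]; simp only [star_mul, mul_assoc]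
    _ = 0 := by rw [hbq, mul_zero]

namespace IsStarProjection

variable {𝕜 E : Type*} [RCLike 𝕜] [NormedAddCommGroup E] [InnerProductSpace 𝕜 E]
  [CompleteSpace E] {P : E →L[𝕜] E}

theorem inner_apply_one_sub_apply (hP : IsStarProjection P) (x y : E) :
    ⟪P x, (1 - P) y⟫_𝕜 = 0 := by
  rw [← adjoint_inner_right, ← star_eq_adjoint, hP.isSelfAdjoint.star_eq,
    ← mul_apply_eq_comp, hP.mul_one_sub_self, zero_apply, inner_zero_right]

theorem norm_add_one_sub_apply_sq (hP : IsStarProjection P) (x y : E) :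
    ‖P x + (1 - P) y‖ ^ 2 = ‖P x‖ ^ 2 + ‖(1 - P) y‖ ^ 2 := by
  rw [norm_add_sq (𝕜 := 𝕜), hP.inner_apply_one_sub_apply, map_zero, mul_zero, add_zero]

theorem norm_sq_add_norm_sq_one_sub_apply (hP : IsStarProjection P) (x : E) :
    ‖P x‖ ^ 2 + ‖(1 - P) x‖ ^ 2 = ‖x‖ ^ 2 := by
  rw [← hP.norm_add_one_sub_apply_sq, sub_apply, one_apply_eq_self, add_sub_cancel]

theorem norm_apply_le (hP : IsStarProjection P) (x : E) : ‖P x‖ ≤ ‖x‖ :=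
  (le_of_opNorm_le P hP.norm_le x).trans_eq (one_mul _)

theorem norm_pinching_le (hP : IsStarProjection P) (A B : E →L[𝕜] E) :
    ‖P * A * P + (1 - P) * B * (1 - P)‖ ≤ max ‖A‖ ‖B‖ := by
  set m := max ‖A‖ ‖B‖
  refine opNorm_le_bound _ (by positivity) fun x ↦ ?_
  have hA : ‖P (A (P x))‖ ≤ m * ‖P x‖ :=
    (hP.norm_apply_le _).trans <| le_of_opNorm_le A (le_max_left _ _) _
  have hB : ‖(1 - P) (B ((1 - P) x))‖ ≤ m * ‖(1 - P) x‖ :=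
    (hP.one_sub.norm_apply_le _).trans <| le_of_opNorm_le B (le_max_right _ _) _
  refine le_of_pow_le_pow_left₀ two_ne_zero (by positivity) ?_
  calc ‖(P * A * P + (1 - P) * B * (1 - P)) x‖ ^ 2
      = ‖P (A (P x))‖ ^ 2 + ‖(1 - P) (B ((1 - P) x))‖ ^ 2 := by
        simp only [add_apply, mul_apply_eq_comp, hP.norm_add_one_sub_apply_sq]
    _ ≤ (m * ‖P x‖) ^ 2 + (m * ‖(1 - P) x‖) ^ 2 := by gcongr
    _ = (m * ‖x‖) ^ 2 := by rw [mul_pow, mul_pow, mul_pow, ← mul_add,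
        hP.norm_sq_add_norm_sq_one_sub_apply]

end IsStarProjection

theorem ContinuousLinearMap.comp_eq_zero_of_ker_le {R M M' N N' : Type*} [Semiring R]
    [AddCommMonoid M] [AddCommMonoid M'] [AddCommMonoid N] [AddCommMonoid N'] [Module R M]
    [Module R M'] [Module R N] [Module R N'] [TopologicalSpace M] [TopologicalSpace M']
    [TopologicalSpace N] [TopologicalSpace N'] {f : M →L[R] N} {g : M →L[R] N'}
    {h : M' →L[R] M} (hfg : LinearMap.ker (f : M →ₗ[R] N) ≤ LinearMap.ker (g : M →ₗ[R] N'))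
    (hf : f.comp h = 0) :
    g.comp h = 0 := by
  ext x
  exact hfg (show f (h x) = 0 from congr($hf x))

/-- For the Duggal transform `T^D = |T|U` one has `‖T^D - γI‖ ≤ ‖T - γI‖` for every `γ ∈ ℂ`;
in particular `‖T^D‖ ≤ ‖T‖`. -/
theorem stmt6 {H : Type*} [NormedAddCommGroup H] [InnerProductSpace ℂ H] [CompleteSpace H]
    (T U R : H →L[ℂ] H)
    (hRpos : R.IsPositive) (hRsq : R * R = adjoint T * T)
    (hUpar : U * adjoint U * U = U)
    (hker : LinearMap.ker (U : H →ₗ[ℂ] H) = LinearMap.ker (T : H →ₗ[ℂ] H))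
    (hTUR : T = U * R) :
    (∀ γ : ℂ, ‖R * U - γ • (1 : H →L[ℂ] H)‖ ≤ ‖T - γ • (1 : H →L[ℂ] H)‖) ∧
    ‖R * U‖ ≤ ‖T‖ := by
  have hU : IsPartialIsometry U := hUpar
  have hP := hU.isStarProjection_star_mul_self
  have hR := hRpos.isSelfAdjoint
  have hTQ : T * (1 - star U * U) = 0 :=
    comp_eq_zero_of_ker_le hker.le hU.mul_one_sub_star_mul_self
  have hRQ : R * (1 - star U * U) = 0 :=
    CStarRing.mul_eq_zero_of_star_mul_self_eq (by rw [hR.star_eq, hRsq, star_eq_adjoint]) hTQ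
  have hQR : (1 - star U * U) * R = 0 := by
    simpa [star_mul, hR.star_eq, hP.one_sub.isSelfAdjoint.star_eq] using congr_arg star hRQ
  have hDuggal : ∀ γ : ℂ, ‖R * U - γ • (1 : H →L[ℂ] H)‖ ≤ ‖T - γ • (1 : H →L[ℂ] H)‖ := by
    intro γ
    rw [hU.mul_sub_smul_one_eq_pinching hRQ hQR γ, ← hTUR]
    exact (hP.norm_pinching_le _ _).trans (max_le (hU.norm_star_mul_mul_le _) le_rfl)
  exact ⟨hDuggal, by simpa using hDuggal 0⟩
end

section
/- Let H be a complex Hilbert space, let T be a bounded linear operator on H with canonical polar decomposition T = U|T|, and let λ ∈ [0,1]. Then 2√(λ-λ²)·‖Ã‖ ≤ ‖M_λ(T)‖ ≤ λ‖T‖ + (1-λ)‖T^D‖, where Ã = |T|^{1/2}U|T|^{1/2} is the Aluthge transform of T. In particular, 2√(λ-λ²)·r(T) ≤ ‖M_λ(T)‖ ≤ ‖T‖, where r(T) is the spectral radius of T. -/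
/-!
Write `R = |T| = S²`. Since `ker U = ker T = ker R`, the partial isometry `U` satisfies
`U* T = R`, hence for every `z`
`Re ⟪M_λ(T) z, U z⟫ = λ‖S z‖² + (1-λ)‖S U z‖² ≥ 2√(λ-λ²) ‖S z‖ ‖S U z‖`,
and the left side is at most `‖M_λ(T)‖ ‖z‖²` because `‖U‖ ≤ 1`. Taking `z = S x` and using
`‖S x‖² ≤ ‖S² x‖ ‖x‖` gives `2√(λ-λ²) ‖S U S x‖ ≤ ‖M_λ(T)‖ ‖x‖`. The spectral radius bound
follows because `T = (U S) S` and the Aluthge transform `S (U S)` have the same spectral radius.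
The upper bounds are the triangle inequality and `‖R U‖ ≤ ‖R‖ ‖U‖ ≤ ‖T‖`.
-/

open ContinuousLinearMap

lemma spectralRadius_mul_comm {𝕜 A : Type*} [NormedField 𝕜] [Ring A] [Algebra 𝕜 A]
    (a b : A) : spectralRadius 𝕜 (a * b) = spectralRadius 𝕜 (b * a) := by
  suffices key : ∀ x y : A, spectralRadius 𝕜 (x * y) ≤ spectralRadius 𝕜 (y * x) from
    le_antisymm (key a b) (key b a)
  intro x y
  refine iSup₂_le fun k hk => ?_
  rcases eq_or_ne k 0 with rfl | hk0
  · simp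
  · have hk' : k ∈ spectrum 𝕜 (y * x) \ {0} :=
      spectrum.nonzero_mul_comm (𝕜 := 𝕜) x y ▸ ⟨hk, hk0⟩
    exact le_iSup₂_of_le k hk'.1 le_rfl

lemma spectralRadius_toReal_le_norm {𝕜 E : Type*} [NontriviallyNormedField 𝕜]
    [NormedAddCommGroup E] [NormedSpace 𝕜 E] [CompleteSpace E] (A : E →L[𝕜] E) :
    (spectralRadius 𝕜 A).toReal ≤ ‖A‖ := by
  rcases subsingleton_or_nontrivial E with _ | _
  · simp
  · exact ENNReal.toReal_le_of_le_ofReal (norm_nonneg A)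
      ((spectrum.spectralRadius_le_nnnorm A).trans_eq (ofReal_norm A).symm)

lemma two_mul_sqrt_sub_sq_mul_mul_le {l : ℝ} (hl : l ∈ Set.Icc (0 : ℝ) 1) (a b : ℝ) :
    2 * √(l - l ^ 2) * a * b ≤ l * a ^ 2 + (1 - l) * b ^ 2 := by
  obtain ⟨hl0, hl1⟩ := hl
  have hsqrt : √(l - l ^ 2) = √l * √(1 - l) := by
    rw [← Real.sqrt_mul hl0]; ring_nf
  have := two_mul_le_add_sq (√l * a) (√(1 - l) * b)
  rw [mul_pow, mul_pow, Real.sq_sqrt hl0, Real.sq_sqrt (by linarith)] at this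
  rw [hsqrt]; linarith

lemma norm_ofReal_smul_add_one_sub_smul_le {E : Type*} [SeminormedAddCommGroup E]
    [NormedSpace ℂ E] {l : ℝ} (hl : l ∈ Set.Icc (0 : ℝ) 1) (x y : E) :
    ‖(l : ℂ) • x + ((1 : ℂ) - (l : ℂ)) • y‖ ≤ l * ‖x‖ + (1 - l) * ‖y‖ := by
  have h1l : (1 : ℂ) - (l : ℂ) = ((1 - l : ℝ) : ℂ) := by push_cast; ring
  calc _ ≤ ‖(l : ℂ) • x‖ + ‖((1 : ℂ) - (l : ℂ)) • y‖ := norm_add_le _ _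
    _ = l * ‖x‖ + (1 - l) * ‖y‖ := by
      rw [norm_smul, norm_smul, h1l, Complex.norm_real, Complex.norm_real,
        Real.norm_of_nonneg hl.1, Real.norm_of_nonneg (sub_nonneg.mpr hl.2)]

lemma isStarProjection_star_mul_self_of_mul_star_mul_self {R : Type*} [NonUnitalSemiring R]
    [StarRing R] {u : R} (hu : u * star u * u = u) :
    IsStarProjection (star u * u) where
  isIdempotentElem := by rw [IsIdempotentElem, mul_assoc, ← mul_assoc u, hu]
  isSelfAdjoint := .star_mul_self u

lemma norm_le_one_of_mul_star_mul_self {E : Type*} [NonUnitalNormedRing E] [StarRing E]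
    [CStarRing E] {u : E} (hu : u * star u * u = u) : ‖u‖ ≤ 1 := by
  have h := (isStarProjection_star_mul_self_of_mul_star_mul_self hu).norm_le
  rw [CStarRing.norm_star_mul_self] at h
  nlinarith [norm_nonneg u]

section Operator

variable {𝕜 E F G : Type*} [RCLike 𝕜]
  [NormedAddCommGroup E] [InnerProductSpace 𝕜 E] [CompleteSpace E]
  [NormedAddCommGroup F] [InnerProductSpace 𝕜 F] [CompleteSpace F]
  [NormedAddCommGroup G] [InnerProductSpace 𝕜 G]

lemma norm_apply_eq_of_adjoint_comp_self_eq [CompleteSpace G] {A : E →L[𝕜] F} {B : E →L[𝕜] G}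
    (h : adjoint A ∘L A = adjoint B ∘L B) (x : E) : ‖A x‖ = ‖B x‖ := by
  have hsq : ‖A x‖ ^ 2 = ‖B x‖ ^ 2 := by
    rw [apply_norm_sq_eq_inner_adjoint_left, apply_norm_sq_eq_inner_adjoint_left, h]
  exact (pow_left_inj₀ (norm_nonneg _) (norm_nonneg _) two_ne_zero).mp hsq

lemma comp_adjoint_comp_self_of_ker_le {U : E →L[𝕜] F} {R : E →L[𝕜] G}
    (hU : U ∘L adjoint U ∘L U = U)
    (hker : LinearMap.ker (U : E →ₗ[𝕜] F) ≤ LinearMap.ker (R : E →ₗ[𝕜] G)) :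
    R ∘L adjoint U ∘L U = R := by
  ext x
  have hx : x - (adjoint U ∘L U) x ∈ LinearMap.ker (U : E →ₗ[𝕜] F) := by
    rw [LinearMap.mem_ker, map_sub, sub_eq_zero]
    exact (congr($hU x)).symm
  have := hker hx
  rw [LinearMap.mem_ker, coe_coe, map_sub, sub_eq_zero] at this
  exact this.symm

lemma re_inner_mul_self_apply_self {S : E →L[𝕜] E} (hS : IsSelfAdjoint S) (z : E) :
    RCLike.re (inner 𝕜 ((S * S) z) z) = ‖S z‖ ^ 2 := by
  rw [apply_norm_sq_eq_inner_adjoint_left, hS.adjoint_eq]; rfl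

lemma norm_apply_eq_of_mul_self_eq_adjoint_mul_self {T R : E →L[𝕜] E} (hR : IsSelfAdjoint R)
    (hRsq : R * R = adjoint T * T) (x : E) : ‖R x‖ = ‖T x‖ :=
  norm_apply_eq_of_adjoint_comp_self_eq (by rw [hR.adjoint_eq]; exact hRsq) x

lemma adjoint_mul_eq_of_polarDecomposition {T U R : E →L[𝕜] E} (hR : IsSelfAdjoint R)
    (hRsq : R * R = adjoint T * T) (hU : U * adjoint U * U = U)
    (hker : LinearMap.ker (U : E →ₗ[𝕜] E) = LinearMap.ker (T : E →ₗ[𝕜] E)) (hTUR : T = U * R) :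
    adjoint U * T = R := by
  have hkerUR : LinearMap.ker (U : E →ₗ[𝕜] E) ≤ LinearMap.ker (R : E →ₗ[𝕜] E) := by
    intro x hx
    rw [hker, LinearMap.mem_ker, coe_coe] at hx
    rw [LinearMap.mem_ker, coe_coe, ← norm_eq_zero,
      norm_apply_eq_of_mul_self_eq_adjoint_mul_self hR hRsq, hx, norm_zero]
  have hRP : R * (adjoint U * U) = R := comp_adjoint_comp_self_of_ker_le hU hkerUR
  have := congr(star $hRP)
  rwa [star_mul, star_mul, ← star_eq_adjoint, star_star, hR.star_eq, mul_assoc, ← hTUR,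
    star_eq_adjoint] at this

lemma mul_norm_mul_mul_le_of_forall {S V : E →L[𝕜] E} (hS : IsSelfAdjoint S) {a K : ℝ}
    (ha : 0 ≤ a) (hK : 0 ≤ K) (h : ∀ z, a * (‖S z‖ * ‖S (V z)‖) ≤ K * ‖z‖ ^ 2) :
    a * ‖S * V * S‖ ≤ K := by
  have hSx : ∀ x, ‖S x‖ ^ 2 ≤ ‖S (S x)‖ * ‖x‖ := fun x =>
    (re_inner_mul_self_apply_self hS x).symm.trans_le (re_inner_le_norm _ _)
  have hbound : ∀ x, ‖((a : 𝕜) • (S * V * S)) x‖ ≤ K * ‖x‖ := by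
    intro x
    rw [smul_apply, norm_smul, RCLike.norm_ofReal, abs_of_nonneg ha, mul_apply_eq_comp,
      mul_apply_eq_comp]
    rcases (norm_nonneg (S (S x))).eq_or_lt with h0 | hpos
    · have : S x = 0 := by
        have := hSx x
        rw [← h0, zero_mul] at this
        exact norm_eq_zero.mp
          ((pow_eq_zero_iff two_ne_zero).mp (le_antisymm this (by positivity)))
      rw [this, map_zero, map_zero, norm_zero, mul_zero]
      positivity
    · refine le_of_mul_le_mul_left ?_ hpos
      calc ‖S (S x)‖ * (a * ‖S (V (S x))‖) = a * (‖S (S x)‖ * ‖S (V (S x))‖) := by ring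
        _ ≤ K * ‖S x‖ ^ 2 := h (S x)
        _ ≤ K * (‖S (S x)‖ * ‖x‖) := mul_le_mul_of_nonneg_left (hSx x) hK
        _ = ‖S (S x)‖ * (K * ‖x‖) := by ring
  have := opNorm_le_bound _ hK hbound
  rwa [norm_smul, RCLike.norm_ofReal, abs_of_nonneg ha] at this

end Operator

section MeanTransform

variable {H : Type*} [NormedAddCommGroup H] [InnerProductSpace ℂ H] [CompleteSpace H]
  {T U S : H →L[ℂ] H}

lemma re_inner_meanTransform_apply (hS : IsSelfAdjoint S) (hUT : adjoint U * T = S * S)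
    (l : ℝ) (z : H) :
    RCLike.re (inner ℂ (((l : ℂ) • T + ((1 : ℂ) - (l : ℂ)) • (S * S * U)) z) (U z)) =
      l * ‖S z‖ ^ 2 + (1 - l) * ‖S (U z)‖ ^ 2 := by
  have hT : inner ℂ (T z) (U z) = inner ℂ ((S * S) z) z := by
    rw [← adjoint_inner_left, ← hUT, mul_apply_eq_comp]
  have h1l : (1 : ℂ) - (l : ℂ) = ((1 - l : ℝ) : ℂ) := by push_cast; ring
  rw [h1l, add_apply, inner_add_left, smul_apply, smul_apply, inner_smul_left, inner_smul_left,
    Complex.conj_ofReal, Complex.conj_ofReal, hT, mul_apply_eq_comp (S * S) U, map_add,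
    ← re_inner_mul_self_apply_self hS, ← re_inner_mul_self_apply_self hS]
  simp only [RCLike.re_to_complex, Complex.re_ofReal_mul]

lemma two_mul_sqrt_mul_norm_mul_norm_le (hS : IsSelfAdjoint S) (hUT : adjoint U * T = S * S)
    (hU : ‖U‖ ≤ 1) {l : ℝ} (hl : l ∈ Set.Icc (0 : ℝ) 1) (z : H) :
    2 * √(l - l ^ 2) * (‖S z‖ * ‖S (U z)‖) ≤
      ‖(l : ℂ) • T + ((1 : ℂ) - (l : ℂ)) • (S * S * U)‖ * ‖z‖ ^ 2 := by
  set M := (l : ℂ) • T + ((1 : ℂ) - (l : ℂ)) • (S * S * U)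
  calc 2 * √(l - l ^ 2) * (‖S z‖ * ‖S (U z)‖)
      ≤ l * ‖S z‖ ^ 2 + (1 - l) * ‖S (U z)‖ ^ 2 := by
        rw [← mul_assoc]; exact two_mul_sqrt_sub_sq_mul_mul_le hl _ _
    _ = RCLike.re (inner ℂ (M z) (U z)) := (re_inner_meanTransform_apply hS hUT l z).symm
    _ ≤ ‖M z‖ * ‖U z‖ := re_inner_le_norm _ _
    _ ≤ (‖M‖ * ‖z‖) * (1 * ‖z‖) := by
        gcongr
        · exact M.le_opNorm z
        · exact (U.le_opNorm z).trans (by gcongr)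
    _ = ‖M‖ * ‖z‖ ^ 2 := by ring

end MeanTransform

/-- Norm bounds for the λ-mean transform: `2√(λ-λ²)‖T̃‖ ≤ ‖M_λ(T)‖ ≤ λ‖T‖ + (1-λ)‖T^D‖`,
and in particular `2√(λ-λ²) r(T) ≤ ‖M_λ(T)‖ ≤ ‖T‖`.  Here `S = |T|^{1/2}`, so the Aluthge
transform is `S * U * S` and the Duggal transform is `R * U`. -/
theorem stmt7 {H : Type*} [NormedAddCommGroup H] [InnerProductSpace ℂ H] [CompleteSpace H]
    (T U R S : H →L[ℂ] H)
    (hRpos : R.IsPositive) (hRsq : R * R = adjoint T * T)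
    (hSpos : S.IsPositive) (hSsq : S * S = R)
    (hUpar : U * adjoint U * U = U)
    (hker : LinearMap.ker (U : H →ₗ[ℂ] H) = LinearMap.ker (T : H →ₗ[ℂ] H))
    (hTUR : T = U * R)
    (l : ℝ) (hl : l ∈ Set.Icc (0 : ℝ) 1) :
    (2 * Real.sqrt (l - l ^ 2) * ‖S * U * S‖ ≤ ‖(l : ℂ) • T + ((1 : ℂ) - (l : ℂ)) • (R * U)‖ ∧
     ‖(l : ℂ) • T + ((1 : ℂ) - (l : ℂ)) • (R * U)‖ ≤ l * ‖T‖ + (1 - l) * ‖R * U‖) ∧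
    (2 * Real.sqrt (l - l ^ 2) * (spectralRadius ℂ T).toReal ≤
        ‖(l : ℂ) • T + ((1 : ℂ) - (l : ℂ)) • (R * U)‖ ∧
     ‖(l : ℂ) • T + ((1 : ℂ) - (l : ℂ)) • (R * U)‖ ≤ ‖T‖) := by
  have hR : IsSelfAdjoint R := hRpos.isSelfAdjoint
  have hS : IsSelfAdjoint S := hSpos.isSelfAdjoint
  have hU : ‖U‖ ≤ 1 := norm_le_one_of_mul_star_mul_self (by rwa [star_eq_adjoint])
  have hUT : adjoint U * T = R := adjoint_mul_eq_of_polarDecomposition hR hRsq hUpar hker hTUR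
  have hRT : ‖R‖ = ‖T‖ :=
    opNorm_ext R T (norm_apply_eq_of_mul_self_eq_adjoint_mul_self hR hRsq)
  subst hSsq
  have hlower : 2 * √(l - l ^ 2) * ‖S * U * S‖ ≤
      ‖(l : ℂ) • T + ((1 : ℂ) - (l : ℂ)) • (S * S * U)‖ :=
    mul_norm_mul_mul_le_of_forall hS (by positivity) (norm_nonneg _)
      (two_mul_sqrt_mul_norm_mul_norm_le hS hUT hU hl)
  have hupper := norm_ofReal_smul_add_one_sub_smul_le hl T (S * S * U)
  have hDuggal : ‖S * S * U‖ ≤ ‖T‖ :=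
    (norm_mul_le _ _).trans (hRT ▸ mul_le_of_le_one_right (norm_nonneg _) hU)
  have hspec : (spectralRadius ℂ T).toReal ≤ ‖S * U * S‖ := by
    rw [hTUR, ← mul_assoc, spectralRadius_mul_comm, ← mul_assoc]
    exact spectralRadius_toReal_le_norm _
  refine ⟨⟨hlower, hupper⟩, (mul_le_mul_of_nonneg_left hspec (by positivity)).trans hlower,
    hupper.trans ?_⟩
  nlinarith [hl.1, hl.2, hDuggal]
end

section
/- Let H be a complex Hilbert space, let T be a bounded linear operator on H with canonical polar decomposition T = U|T| and Duggal transform T^D = |T|U, and let λ ∈ [0,1]. Then ‖M_λ(T)‖ ≤ (‖λ|T| + (1-λ)|T^D|‖ + ‖λ|T*| + (1-λ)|(T^D)*|‖)/2 ≤ λ‖T‖ + (1-λ)‖T^D‖. In particular, for the mean transform T̂ = M_{1/2}(T) one has ‖T̂‖ ≤ (‖|T| + |T^D|‖ + ‖|T*| + |(T^D)*|‖)/4 ≤ ‖T‖. -/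
/-!
The heart of the matter is the mixed Schwarz inequality
`‖⟪A x, y⟫‖² ≤ ⟪|A| x, x⟫ ⟪|A*| y, y⟫`. It rests on the intertwining relation
`|A*|^{1/2} A = A |A|^{1/2}`, obtained from `(A A*) A = A (A* A)` by applying the square root
twice; a polynomial identity `p(b) x = x p(a)` passes to `f(b) x = x f(a)` for continuous `f` by
Weierstrass approximation on an interval containing both spectra.

Adding the mixed Schwarz inequalities for `A` and `B` and using Cauchy–Schwarz in `ℝ²` gives
`‖A + B‖² ≤ ‖|A| + |B|‖ ‖|A*| + |B*|‖`, and AM–GM turns this into the half-sum bound. For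
`A = λT`, `B = (1-λ)T^D` this is the first inequality; the second is the triangle inequality with
`‖|A|‖ = ‖A‖` and `‖T^D‖ ≤ ‖|T|‖ ‖U‖ ≤ ‖T‖`, as a partial isometry has norm at most one.
-/
open Polynomial in
theorem Polynomial.aeval_mul_eq_mul_aeval_of_mul_eq {R B : Type*} [CommSemiring R] [Semiring B]
    [Algebra R B] {a b x : B} (h : b * x = x * a) (p : R[X]) :
    aeval b p * x = x * aeval a p := by
  have hpow (n : ℕ) : b ^ n * x = x * a ^ n := by
    induction n with
    | zero => simp
    | succ n ih => rw [pow_succ, pow_succ, mul_assoc, h, ← mul_assoc, ih, mul_assoc]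
  induction p using Polynomial.induction_on' with
  | add p q hp hq => simp only [map_add, add_mul, mul_add, hp, hq]
  | monomial n c =>
    rw [aeval_monomial, aeval_monomial, mul_assoc, hpow, ← mul_assoc, Algebra.commutes c x,
      mul_assoc]

theorem norm_le_one_of_mul_star_mul_self_eq {A : Type*} [NonUnitalNormedRing A] [StarRing A]
    [CStarRing A] {a : A} (h : a * star a * a = a) : ‖a‖ ≤ 1 := by
  have hproj : IsStarProjection (star a * a) :=
    ⟨by rw [IsIdempotentElem, mul_assoc, ← mul_assoc a, h], .star_mul_self a⟩
  have := hproj.norm_le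
  rw [CStarRing.norm_star_mul_self] at this
  nlinarith [norm_nonneg a]

section CStarAlgebra

variable {A : Type*} [CStarAlgebra A]

open Polynomial in
theorem norm_cfc_sub_aeval_le {a : A} (ha : IsSelfAdjoint a) {f : ℝ → ℝ} (hf : Continuous f)
    (p : ℝ[X]) {δ : ℝ} (hδ : 0 ≤ δ) (h : ∀ t ∈ spectrum ℝ a, |f t - p.eval t| ≤ δ) :
    ‖cfc f a - aeval a p‖ ≤ δ := by
  rw [← cfc_polynomial p a, ← cfc_sub f _ a hf.continuousOn]
  exact norm_cfc_le hδ h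

open Polynomial in
theorem cfc_mul_eq_mul_cfc_of_mul_eq {a b x : A} (ha : IsSelfAdjoint a) (hb : IsSelfAdjoint b)
    (h : b * x = x * a) {f : ℝ → ℝ} (hf : Continuous f) : cfc f b * x = x * cfc f a := by
  nontriviality A
  refine eq_of_forall_dist_le fun ε hε => ?_
  set M := max ‖a‖ ‖b‖
  set δ := ε / (2 * ‖x‖ + 1)
  obtain ⟨p, hp⟩ := exists_polynomial_near_of_continuousOn (-M) M f hf.continuousOn δ
    (by positivity)
  have approx {c : A} (hc : IsSelfAdjoint c) (hcM : ‖c‖ ≤ M) : ‖cfc f c - aeval c p‖ ≤ δ :=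
    norm_cfc_sub_aeval_le hc hf p (by positivity) fun t ht => by
      rw [abs_sub_comm]
      exact (hp t (abs_le.mp ((spectrum.norm_le_norm_of_mem ht).trans hcM))).le
  calc dist (cfc f b * x) (x * cfc f a)
      = ‖(cfc f b - aeval b p) * x + x * (aeval a p - cfc f a)‖ := by
        rw [dist_eq_norm, sub_mul, mul_sub, aeval_mul_eq_mul_aeval_of_mul_eq h p]
        congr 1
        abel
    _ ≤ δ * ‖x‖ + ‖x‖ * δ := norm_add_le_of_le
        (norm_mul_le_of_le (approx hb (le_max_right _ _)) le_rfl)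
        (norm_mul_le_of_le le_rfl (by rw [norm_sub_rev]; exact approx ha (le_max_left _ _)))
    _ ≤ δ * (2 * ‖x‖ + 1) := by nlinarith [(by positivity : 0 ≤ δ)]
    _ = ε := div_mul_cancel₀ _ (by positivity)

variable [PartialOrder A] [StarOrderedRing A]

theorem CFC.sqrt_mul_eq_mul_sqrt_of_mul_eq {a b x : A} (ha : 0 ≤ a) (hb : 0 ≤ b)
    (h : b * x = x * a) : CFC.sqrt b * x = x * CFC.sqrt a := by
  rw [CFC.sqrt_eq_real_sqrt a, CFC.sqrt_eq_real_sqrt b, cfcₙ_eq_cfc, cfcₙ_eq_cfc]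
  exact cfc_mul_eq_mul_cfc_of_mul_eq ha.isSelfAdjoint hb.isSelfAdjoint h Real.continuous_sqrt

theorem CFC.abs_star_mul_eq_mul_abs (a : A) : CFC.abs (star a) * a = a * CFC.abs a := by
  rw [CFC.abs, CFC.abs, star_star]
  exact CFC.sqrt_mul_eq_mul_sqrt_of_mul_eq (star_mul_self_nonneg a) (mul_star_self_nonneg a)
    (mul_assoc _ _ _)

theorem CFC.abs_eq_of_mul_self_eq {a s : A} (hs : 0 ≤ s) (h : s * s = star a * a) :
    CFC.abs a = s := by
  rw [CFC.abs, ← h, CFC.sqrt_mul_self s]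

theorem CFC.norm_smul_abs_add_smul_abs_le {c d : ℝ} (hc : 0 ≤ c) (hd : 0 ≤ d) (a b : A) :
    ‖(c : ℂ) • CFC.abs a + (d : ℂ) • CFC.abs b‖ ≤ c * ‖a‖ + d * ‖b‖ := by
  refine (norm_add_le _ _).trans_eq ?_
  rw [norm_smul, norm_smul, Complex.norm_of_nonneg hc, Complex.norm_of_nonneg hd, CFC.norm_abs,
    CFC.norm_abs]

theorem CFC.abs_ofReal_smul {c : ℝ} (hc : 0 ≤ c) (a : A) :
    CFC.abs ((c : ℂ) • a) = (c : ℂ) • CFC.abs a := by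
  rw [CFC.abs_smul, Complex.norm_of_nonneg hc, Complex.coe_smul]

end CStarAlgebra

section Operator

variable {H : Type*} [NormedAddCommGroup H] [InnerProductSpace ℂ H] [CompleteSpace H]

open RCLike ContinuousLinearMap
open scoped InnerProductSpace

theorem IsSelfAdjoint.norm_apply_sq {s : H →L[ℂ] H} (hs : IsSelfAdjoint s) (x : H) :
    ‖s x‖ ^ 2 = re ⟪(s * s) x, x⟫_ℂ := by
  rw [apply_norm_sq_eq_inner_adjoint_left, hs.adjoint_eq]
  rfl

namespace ContinuousLinearMap

theorem norm_abs_apply (A : H →L[ℂ] H) (x : H) : ‖CFC.abs A x‖ = ‖A x‖ := by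
  rw [← sq_eq_sq₀ (norm_nonneg _) (norm_nonneg _), (CFC.abs_nonneg A).isSelfAdjoint.norm_apply_sq,
    CFC.abs_mul_abs, star_eq_adjoint, apply_norm_sq_eq_inner_adjoint_left]
  rfl

theorem sqrt_re_inner_eq_norm_sqrt_apply {P : H →L[ℂ] H} (hP : 0 ≤ P) (x : H) :
    √(re ⟪P x, x⟫_ℂ) = ‖CFC.sqrt P x‖ := by
  rw [← Real.sqrt_sq (norm_nonneg (CFC.sqrt P x)), (CFC.sqrt_nonneg P).isSelfAdjoint.norm_apply_sq,
    CFC.sqrt_mul_sqrt_self P hP]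

theorem dense_range_sup_ker {s : H →L[ℂ] H} (hs : IsSelfAdjoint s) :
    Dense (((s : H →ₗ[ℂ] H).range ⊔ (s : H →ₗ[ℂ] H).ker : Submodule ℂ H) : Set H) := by
  rw [Submodule.dense_iff_topologicalClosure_eq_top, Submodule.topologicalClosure_eq_top_iff,
    ← Submodule.inf_orthogonal, orthogonal_range, hs.adjoint_eq, Submodule.inf_orthogonal_eq_bot]

theorem norm_inner_le_of_mul_eq_mul {A s s' : H →L[ℂ] H} (hs : IsSelfAdjoint s)
    (hs' : IsSelfAdjoint s') (hint : s' * A = A * s) (hnorm : ∀ z, ‖A z‖ = ‖s (s z)‖)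
    (x y : H) : ‖⟪A x, y⟫_ℂ‖ ≤ ‖s x‖ * ‖s' y‖ := by
  have hclosed : IsClosed {z | ‖⟪A z, y⟫_ℂ‖ ≤ ‖s z‖ * ‖s' y‖} :=
    isClosed_le (by fun_prop) (by fun_prop)
  refine hclosed.closure_subset_iff.mpr ?_ (dense_range_sup_ker hs x)
  intro z hz
  obtain ⟨_, ⟨w, rfl⟩, k, hk, rfl⟩ := Submodule.mem_sup.mp hz
  have hsk : s k = 0 := hk
  have hAk : A k = 0 := by simpa [hsk] using hnorm k
  calc ‖⟪A (s w + k), y⟫_ℂ‖ = ‖⟪A w, s' y⟫_ℂ‖ := by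
        rw [map_add, hAk, add_zero, show A (s w) = s' (A w) from congr($hint.symm w)]
        exact congrArg norm (hs'.isSymmetric (A w) y)
    _ ≤ ‖A w‖ * ‖s' y‖ := norm_inner_le_norm _ _
    _ = ‖s (s w + k)‖ * ‖s' y‖ := by rw [hnorm, map_add s, hsk, add_zero]

theorem norm_inner_le_sqrt_mul_sqrt (A : H →L[ℂ] H) (x y : H) :
    ‖⟪A x, y⟫_ℂ‖ ≤ √(re ⟪CFC.abs A x, x⟫_ℂ) * √(re ⟪CFC.abs (adjoint A) y, y⟫_ℂ) := by
  have hint : CFC.sqrt (CFC.abs (adjoint A)) * A = A * CFC.sqrt (CFC.abs A) := by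
    rw [← star_eq_adjoint]
    exact CFC.sqrt_mul_eq_mul_sqrt_of_mul_eq (CFC.abs_nonneg _) (CFC.abs_nonneg _)
      (CFC.abs_star_mul_eq_mul_abs A)
  have hnorm (z : H) : ‖A z‖ = ‖CFC.sqrt (CFC.abs A) (CFC.sqrt (CFC.abs A) z)‖ :=
    (norm_abs_apply A z).symm.trans
      congr(‖$((CFC.sqrt_mul_sqrt_self (CFC.abs A) (CFC.abs_nonneg A)).symm) z‖)
  rw [sqrt_re_inner_eq_norm_sqrt_apply (CFC.abs_nonneg A),
    sqrt_re_inner_eq_norm_sqrt_apply (CFC.abs_nonneg (adjoint A))]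
  exact norm_inner_le_of_mul_eq_mul (CFC.sqrt_nonneg _).isSelfAdjoint
    (CFC.sqrt_nonneg _).isSelfAdjoint hint hnorm x y

theorem norm_add_le_sqrt_mul_sqrt (A B : H →L[ℂ] H) :
    ‖A + B‖ ≤ √‖CFC.abs A + CFC.abs B‖ * √‖CFC.abs (adjoint A) + CFC.abs (adjoint B)‖ := by
  refine opNorm_le_of_re_inner_le (by positivity) fun x y hx hy => ?_
  have hpos (P : H →L[ℂ] H) (z : H) : 0 ≤ re ⟪CFC.abs P z, z⟫_ℂ :=
    ((nonneg_iff_isPositive _).mp (CFC.abs_nonneg P)).re_inner_nonneg_left z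
  have cauchySchwarz (a₁ a₂ b₁ b₂ : ℝ) (ha₁ : 0 ≤ a₁) (ha₂ : 0 ≤ a₂) (hb₁ : 0 ≤ b₁) (hb₂ : 0 ≤ b₂) :
      √a₁ * √a₂ + √b₁ * √b₂ ≤ √(a₁ + b₁) * √(a₂ + b₂) := by
    simpa [Fin.sum_univ_two] using Real.sum_sqrt_mul_sqrt_le Finset.univ (f := ![a₁, b₁])
      (g := ![a₂, b₂]) (by simp [Fin.forall_fin_two, *]) (by simp [Fin.forall_fin_two, *])
  have hunit (P : H →L[ℂ] H) {z : H} (hz : ‖z‖ = 1) : re ⟪P z, z⟫_ℂ ≤ ‖P‖ :=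
    calc re ⟪P z, z⟫_ℂ ≤ ‖P z‖ * ‖z‖ := (re_le_norm _).trans (norm_inner_le_norm _ _)
      _ ≤ ‖P‖ := by simpa [hz] using P.le_opNorm z
  calc re ⟪(A + B) x, y⟫_ℂ ≤ ‖⟪A x, y⟫_ℂ‖ + ‖⟪B x, y⟫_ℂ‖ := by
        rw [add_apply, inner_add_left]
        exact (re_le_norm _).trans (norm_add_le _ _)
    _ ≤ √(re ⟪CFC.abs A x, x⟫_ℂ) * √(re ⟪CFC.abs (adjoint A) y, y⟫_ℂ) +
        √(re ⟪CFC.abs B x, x⟫_ℂ) * √(re ⟪CFC.abs (adjoint B) y, y⟫_ℂ) :=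
      add_le_add (norm_inner_le_sqrt_mul_sqrt A x y) (norm_inner_le_sqrt_mul_sqrt B x y)
    _ ≤ √(re ⟪(CFC.abs A + CFC.abs B) x, x⟫_ℂ) *
        √(re ⟪(CFC.abs (adjoint A) + CFC.abs (adjoint B)) y, y⟫_ℂ) := by
      simp only [add_apply, inner_add_left, map_add]
      exact cauchySchwarz _ _ _ _ (hpos _ _) (hpos _ _) (hpos _ _) (hpos _ _)
    _ ≤ √‖CFC.abs A + CFC.abs B‖ * √‖CFC.abs (adjoint A) + CFC.abs (adjoint B)‖ := by
      gcongr
      · exact hunit _ hx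
      · exact hunit _ hy

theorem norm_smul_add_smul_le {c d : ℝ} (hc : 0 ≤ c) (hd : 0 ≤ d)
    (A B : H →L[ℂ] H) :
    ‖(c : ℂ) • A + (d : ℂ) • B‖ ≤
      (‖(c : ℂ) • CFC.abs A + (d : ℂ) • CFC.abs B‖ +
        ‖(c : ℂ) • CFC.abs (adjoint A) + (d : ℂ) • CFC.abs (adjoint B)‖) / 2 := by
  have hstar (r : ℝ) (P : H →L[ℂ] H) : adjoint ((r : ℂ) • P) = (r : ℂ) • adjoint P := by
    rw [← star_eq_adjoint, ← star_eq_adjoint, star_smul, Complex.star_def, Complex.conj_ofReal]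
  refine (norm_add_le_sqrt_mul_sqrt _ _).trans ?_
  rw [hstar, hstar, CFC.abs_ofReal_smul hc, CFC.abs_ofReal_smul hd, CFC.abs_ofReal_smul hc,
    CFC.abs_ofReal_smul hd]
  have amgm := two_mul_le_add_sq √‖(c : ℂ) • CFC.abs A + (d : ℂ) • CFC.abs B‖
    √‖(c : ℂ) • CFC.abs (adjoint A) + (d : ℂ) • CFC.abs (adjoint B)‖
  rw [Real.sq_sqrt (norm_nonneg _), Real.sq_sqrt (norm_nonneg _)] at amgm
  linarith

end ContinuousLinearMap

end Operator

open ContinuousLinearMap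

/-- Here `R = |T|`, `P₁ = |T^D|`, `P₂ = |T*|`, `P₃ = |(T^D)*|`, and `R * U` is the Duggal
transform `T^D`. -/
theorem stmt9_general {H : Type*} [NormedAddCommGroup H] [InnerProductSpace ℂ H] [CompleteSpace H]
    (T U R P₁ P₂ P₃ : H →L[ℂ] H)
    (hRpos : R.IsPositive) (hRsq : R * R = adjoint T * T)
    (hUpar : U * adjoint U * U = U)
    (hP₁pos : P₁.IsPositive) (hP₁sq : P₁ * P₁ = adjoint (R * U) * (R * U))
    (hP₂pos : P₂.IsPositive) (hP₂sq : P₂ * P₂ = T * adjoint T)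
    (hP₃pos : P₃.IsPositive) (hP₃sq : P₃ * P₃ = (R * U) * adjoint (R * U))
    (l : ℝ) (hl : l ∈ Set.Icc (0 : ℝ) 1) :
    (‖(l : ℂ) • T + ((1 : ℂ) - (l : ℂ)) • (R * U)‖ ≤
        (‖(l : ℂ) • R + ((1 : ℂ) - (l : ℂ)) • P₁‖ +
         ‖(l : ℂ) • P₂ + ((1 : ℂ) - (l : ℂ)) • P₃‖) / 2 ∧
     (‖(l : ℂ) • R + ((1 : ℂ) - (l : ℂ)) • P₁‖ +
      ‖(l : ℂ) • P₂ + ((1 : ℂ) - (l : ℂ)) • P₃‖) / 2 ≤ l * ‖T‖ + (1 - l) * ‖R * U‖) ∧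
    (‖(2 : ℂ)⁻¹ • (T + R * U)‖ ≤ (‖R + P₁‖ + ‖P₂ + P₃‖) / 4 ∧
     (‖R + P₁‖ + ‖P₂ + P₃‖) / 4 ≤ ‖T‖) := by
  have eq_abs {A S : H →L[ℂ] H} (hS : S.IsPositive) (h : S * S = adjoint A * A) :
      S = CFC.abs A :=
    (CFC.abs_eq_of_mul_self_eq ((nonneg_iff_isPositive S).mpr hS) h).symm
  obtain rfl := eq_abs hP₁pos hP₁sq
  obtain rfl := eq_abs hP₂pos (by rwa [adjoint_adjoint])
  obtain rfl := eq_abs hP₃pos (by rwa [adjoint_adjoint])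
  obtain rfl := eq_abs hRpos hRsq
  obtain ⟨hl₀, hl₁⟩ := hl
  have hDuggal : ‖CFC.abs T * U‖ ≤ ‖T‖ := by
    have hU : ‖U‖ ≤ 1 := norm_le_one_of_mul_star_mul_self_eq (by rwa [star_eq_adjoint])
    calc ‖CFC.abs T * U‖ ≤ ‖CFC.abs T‖ * ‖U‖ := norm_mul_le _ _
      _ ≤ ‖T‖ := by rw [CFC.norm_abs]; exact mul_le_of_le_one_right (norm_nonneg _) hU
  have bound (c d : ℝ) (hc : 0 ≤ c) (hd : 0 ≤ d) :=
    add_le_add (CFC.norm_smul_abs_add_smul_abs_le hc hd T (CFC.abs T * U))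
      (CFC.norm_smul_abs_add_smul_abs_le hc hd (adjoint T) (adjoint (CFC.abs T * U)))
  have mean := norm_smul_add_smul_le zero_le_one zero_le_one T (CFC.abs T * U)
  have mean_bound := bound 1 1 zero_le_one zero_le_one
  simp only [Complex.ofReal_one, one_smul, LinearIsometryEquiv.norm_map] at mean mean_bound
  rw [show (1 : ℂ) - l = ((1 - l : ℝ) : ℂ) by push_cast; ring]
  have weighted_bound := bound l (1 - l) hl₀ (by linarith)
  simp only [LinearIsometryEquiv.norm_map] at weighted_bound
  refine ⟨⟨norm_smul_add_smul_le hl₀ (by linarith) _ _, by linarith⟩, ?_, by linarith⟩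
  rw [norm_smul, norm_inv, Complex.norm_two]
  linarith

/-- `‖M_λ(T)‖ ≤ (‖λ|T| + (1-λ)|T^D|‖ + ‖λ|T*| + (1-λ)|(T^D)*|‖)/2 ≤ λ‖T‖ + (1-λ)‖T^D‖`,
and the particular case `λ = 1/2` for the mean transform.  Here `R = |T|`, `P₁ = |T^D|`,
`P₂ = |T*|`, `P₃ = |(T^D)*|`, and the Duggal transform is `T^D = R * U`. -/
theorem stmt9 {H : Type*} [NormedAddCommGroup H] [InnerProductSpace ℂ H] [CompleteSpace H]
    (T U R P₁ P₂ P₃ : H →L[ℂ] H)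
    (hRpos : R.IsPositive) (hRsq : R * R = adjoint T * T)
    (hUpar : U * adjoint U * U = U)
    (hker : LinearMap.ker (U : H →ₗ[ℂ] H) = LinearMap.ker (T : H →ₗ[ℂ] H))
    (hTUR : T = U * R)
    (hP₁pos : P₁.IsPositive) (hP₁sq : P₁ * P₁ = adjoint (R * U) * (R * U))
    (hP₂pos : P₂.IsPositive) (hP₂sq : P₂ * P₂ = T * adjoint T)
    (hP₃pos : P₃.IsPositive) (hP₃sq : P₃ * P₃ = (R * U) * adjoint (R * U))
    (l : ℝ) (hl : l ∈ Set.Icc (0 : ℝ) 1) :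
    (‖(l : ℂ) • T + ((1 : ℂ) - (l : ℂ)) • (R * U)‖ ≤
        (‖(l : ℂ) • R + ((1 : ℂ) - (l : ℂ)) • P₁‖ +
         ‖(l : ℂ) • P₂ + ((1 : ℂ) - (l : ℂ)) • P₃‖) / 2 ∧
     (‖(l : ℂ) • R + ((1 : ℂ) - (l : ℂ)) • P₁‖ +
      ‖(l : ℂ) • P₂ + ((1 : ℂ) - (l : ℂ)) • P₃‖) / 2 ≤ l * ‖T‖ + (1 - l) * ‖R * U‖) ∧
    (‖(2 : ℂ)⁻¹ • (T + R * U)‖ ≤ (‖R + P₁‖ + ‖P₂ + P₃‖) / 4 ∧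
     (‖R + P₁‖ + ‖P₂ + P₃‖) / 4 ≤ ‖T‖) :=
  stmt9_general T U R P₁ P₂ P₃ hRpos hRsq hUpar hP₁pos hP₁sq hP₂pos hP₂sq hP₃pos hP₃sq l hl
end

section
/- Let H be a complex Hilbert space, let T be a bounded linear operator on H with canonical polar decomposition T = U|T| and Duggal transform T^D = |T|U, let λ ∈ [0,1], and set Q_λ(T) = λ²|T|² + (1-λ)²|T^D|². Then ‖M_λ(T)‖⁴ ≤ ‖Q_λ(T)‖² + 4(λ-λ²)²·ω(T*T^D)² + 2(λ-λ²)·ω(Q_λ(T)T*T^D + T*T^D Q_λ(T)), where ω denotes the numerical radius. -/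
/-!
Write `M = λT + (1-λ)T^D`, `S = T*T^D`, `K = S + S*` and `c = λ - λ²`. Expanding the product gives
`M*M = Q_λ(T) + cK`, so `‖M‖⁴ = ‖Q_λ(T) + cK‖²` by the C*-identity. For a unit vector `x`,
`‖(Q + cK)x‖² = ‖Qx‖² + 2c Re⟨Qx, Kx⟩ + c²‖Kx‖²`. As `Q` is self-adjoint, the cross term is
`Re⟨(QS + SQ)x, x⟩ ≤ ω(QS + SQ)`; and `‖K‖ ≤ 2ω(S)` because the norm of the self-adjoint `K` is
the supremum of `|⟨Kx, x⟩| = 2|Re⟨Sx, x⟩|`.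
-/

open ContinuousLinearMap

/-- The numerical radius `ω(A) = sup{|⟨Ax,x⟩| : ‖x‖ = 1}`. -/
noncomputable def numericalRadius {H : Type*} [NormedAddCommGroup H] [InnerProductSpace ℂ H]
    (A : H →L[ℂ] H) : ℝ :=
  sSup {r : ℝ | ∃ x : H, ‖x‖ = 1 ∧ r = ‖inner ℂ (A x) x‖}

open RCLike

lemma ContinuousLinearMap.sq_opNorm_le_of_sq_norm_apply_le {𝕜 E F : Type*}
    [NontriviallyNormedField 𝕜] [SeminormedAddCommGroup E] [SeminormedAddCommGroup F]
    [NormedSpace 𝕜 E] [NormedSpace 𝕜 F] {A : E →L[𝕜] F} {B : ℝ} (hB : 0 ≤ B)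
    (h : ∀ x, ‖A x‖ ^ 2 ≤ B * ‖x‖ ^ 2) : ‖A‖ ^ 2 ≤ B := by
  have hA : ‖A‖ ≤ √B := A.opNorm_le_bound (Real.sqrt_nonneg B) fun x ↦ by
    rw [← Real.sqrt_sq (norm_nonneg x), ← Real.sqrt_mul hB]
    exact Real.le_sqrt_of_sq_le (h x)
  calc ‖A‖ ^ 2 ≤ √B ^ 2 := by gcongr
    _ = B := Real.sq_sqrt hB

lemma star_smul_add_smul_mul_self {A : Type*} [Ring A] [StarRing A] [Algebra ℂ A]
    [StarModule ℂ A] (x y : A) (a b : ℝ) :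
    star ((a : ℂ) • x + (b : ℂ) • y) * ((a : ℂ) • x + (b : ℂ) • y) =
      (a : ℂ) ^ 2 • (star x * x) + (b : ℂ) ^ 2 • (star y * y) +
        ((a * b : ℝ) : ℂ) • (star x * y + star (star x * y)) := by
  simp only [star_add, star_smul, star_mul, star_star, Complex.star_def, Complex.conj_ofReal,
    mul_add, add_mul, smul_mul_assoc, mul_smul_comm, smul_smul, smul_add]
  match_scalars <;> ring

section NumericalRadius

variable {H : Type*} [NormedAddCommGroup H] [InnerProductSpace ℂ H]

lemma bddAbove_numericalRadius_set (A : H →L[ℂ] H) :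
    BddAbove {r : ℝ | ∃ x : H, ‖x‖ = 1 ∧ r = ‖inner ℂ (A x) x‖} := by
  refine ⟨‖A‖, ?_⟩
  rintro r ⟨x, hx, rfl⟩
  calc ‖inner ℂ (A x) x‖ ≤ ‖A x‖ * ‖x‖ := norm_inner_le_norm _ _
    _ ≤ ‖A‖ * ‖x‖ * ‖x‖ := by gcongr; exact A.le_opNorm x
    _ = ‖A‖ := by rw [hx, mul_one, mul_one]

lemma numericalRadius_nonneg (A : H →L[ℂ] H) : 0 ≤ numericalRadius A :=
  Real.sSup_nonneg fun _ ⟨_, _, hr⟩ ↦ hr ▸ norm_nonneg _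

lemma norm_inner_apply_self_le_numericalRadius (A : H →L[ℂ] H) {x : H} (hx : ‖x‖ = 1) :
    ‖inner ℂ (A x) x‖ ≤ numericalRadius A :=
  le_csSup (bddAbove_numericalRadius_set A) ⟨x, hx, rfl⟩

lemma norm_inner_apply_self_le_numericalRadius_mul_sq (A : H →L[ℂ] H) (x : H) :
    ‖inner ℂ (A x) x‖ ≤ numericalRadius A * ‖x‖ ^ 2 := by
  rcases eq_or_ne x 0 with rfl | hx
  · simp
  have key := norm_inner_apply_self_le_numericalRadius A (norm_smul_inv_norm (𝕜 := ℂ) hx)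
  simp only [map_smul, inner_smul_left, inner_smul_right, norm_mul, norm_conj, norm_inv,
    norm_ofReal, abs_norm] at key
  rwa [← mul_assoc, ← sq, inv_pow, inv_mul_le_iff₀ (by positivity), mul_comm] at key

variable [CompleteSpace H]

lemma norm_add_adjoint_le_two_mul_numericalRadius (S : H →L[ℂ] H) :
    ‖S + adjoint S‖ ≤ 2 * numericalRadius S := by
  have hK : IsSelfAdjoint (S + adjoint S) := star_eq_adjoint S ▸ IsSelfAdjoint.add_star_self S
  rw [norm_eq_iSup_rayleighQuotient _ hK.isSymmetric]
  refine ciSup_le fun x ↦ ?_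
  rcases eq_or_ne x 0 with rfl | hx
  · simpa using numericalRadius_nonneg S
  have hre : re (inner ℂ ((S + adjoint S) x) x) = 2 * re (inner ℂ (S x) x) := by
    rw [add_apply, inner_add_left, adjoint_inner_left, map_add, inner_re_symm]
    ring
  rw [rayleighQuotient, reApplyInnerSelf_apply, abs_div, abs_sq,
    div_le_iff₀ (by positivity), hre, abs_mul, abs_two, mul_assoc]
  gcongr
  exact (abs_re_le_norm _).trans (norm_inner_apply_self_le_numericalRadius_mul_sq S x)

lemma IsSelfAdjoint.re_inner_mul_add_mul_apply_self {Q : H →L[ℂ] H} (hQ : IsSelfAdjoint Q)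
    (S : H →L[ℂ] H) (x : H) :
    re (inner ℂ ((Q * S + S * Q) x) x) = re (inner ℂ (Q x) ((S + adjoint S) x)) := by
  rw [add_apply, add_apply, mul_apply_eq_comp, mul_apply_eq_comp, inner_add_left,
    inner_add_right, adjoint_inner_right, ← hQ.adjoint_eq, adjoint_inner_left, hQ.adjoint_eq,
    map_add, map_add, inner_re_symm (S x)]

lemma IsSelfAdjoint.sq_norm_add_smul_add_adjoint_le {Q : H →L[ℂ] H} (hQ : IsSelfAdjoint Q)
    (S : H →L[ℂ] H) {c : ℝ} (hc : 0 ≤ c) :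
    ‖Q + (c : ℂ) • (S + adjoint S)‖ ^ 2 ≤
      ‖Q‖ ^ 2 + 4 * c ^ 2 * numericalRadius S ^ 2 +
        2 * c * numericalRadius (Q * S + S * Q) := by
  have := numericalRadius_nonneg S
  have := numericalRadius_nonneg (Q * S + S * Q)
  refine sq_opNorm_le_of_sq_norm_apply_le (by positivity) fun x ↦ ?_
  set K := S + adjoint S
  have hQx : ‖Q x‖ ≤ ‖Q‖ * ‖x‖ := Q.le_opNorm x
  have hKx : ‖K x‖ ≤ 2 * numericalRadius S * ‖x‖ :=
    (K.le_opNorm x).trans (by gcongr; exact norm_add_adjoint_le_two_mul_numericalRadius S)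
  have hcross : re (inner ℂ (Q x) (K x)) ≤ numericalRadius (Q * S + S * Q) * ‖x‖ ^ 2 := by
    rw [← hQ.re_inner_mul_add_mul_apply_self]
    exact (re_le_norm _).trans (norm_inner_apply_self_le_numericalRadius_mul_sq _ x)
  calc ‖(Q + (c : ℂ) • K) x‖ ^ 2
        = ‖Q x‖ ^ 2 + 2 * c * re (inner ℂ (Q x) (K x)) + c ^ 2 * ‖K x‖ ^ 2 := by
        simp only [re_to_complex]
        rw [add_apply, smul_apply, norm_add_sq (𝕜 := ℂ), re_to_complex, inner_smul_right,
          norm_smul, Complex.re_ofReal_mul, Complex.norm_real, Real.norm_eq_abs, mul_pow,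
          sq_abs, mul_assoc]
    _ ≤ (‖Q‖ * ‖x‖) ^ 2 + 2 * c * (numericalRadius (Q * S + S * Q) * ‖x‖ ^ 2) +
        c ^ 2 * (2 * numericalRadius S * ‖x‖) ^ 2 := by gcongr
    _ = _ := by ring

end NumericalRadius

theorem stmt10_general {H : Type*} [NormedAddCommGroup H] [InnerProductSpace ℂ H] [CompleteSpace H]
    (T U R Q : H →L[ℂ] H)
    (l : ℝ) (hl : l ∈ Set.Icc (0 : ℝ) 1)
    (hQ : Q = ((l : ℂ) ^ 2) • (adjoint T * T) +
      (((1 : ℂ) - (l : ℂ)) ^ 2) • (adjoint (R * U) * (R * U))) :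
    ‖(l : ℂ) • T + ((1 : ℂ) - (l : ℂ)) • (R * U)‖ ^ 4 ≤
      ‖Q‖ ^ 2 + 4 * (l - l ^ 2) ^ 2 * numericalRadius (adjoint T * (R * U)) ^ 2 +
        2 * (l - l ^ 2) *
          numericalRadius (Q * (adjoint T * (R * U)) + (adjoint T * (R * U)) * Q) := by
  have h1l : (1 : ℂ) - l = ((1 - l : ℝ) : ℂ) := by push_cast; ring
  rw [h1l] at hQ ⊢
  set M := (l : ℂ) • T + ((1 - l : ℝ) : ℂ) • (R * U) with hM
  set S := adjoint T * (R * U)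
  have hQsa : IsSelfAdjoint Q := by
    have hsq (r : ℝ) : IsSelfAdjoint ((r : ℂ) ^ 2) := .pow (Complex.conj_ofReal r) 2
    rw [hQ, ← star_eq_adjoint, ← star_eq_adjoint]
    exact ((hsq l).smul (.star_mul_self T)).add ((hsq _).smul (.star_mul_self _))
  have hMM : star M * M = Q + ((l - l ^ 2 : ℝ) : ℂ) • (S + adjoint S) := by
    rw [hM, star_smul_add_smul_mul_self, hQ, show l * (1 - l) = l - l ^ 2 by ring]
    simp only [star_eq_adjoint, S]
  calc ‖M‖ ^ 4 = ‖star M * M‖ ^ 2 := by rw [CStarRing.norm_star_mul_self]; ring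
    _ = ‖Q + ((l - l ^ 2 : ℝ) : ℂ) • (S + adjoint S)‖ ^ 2 := by rw [hMM]
    _ ≤ _ := hQsa.sq_norm_add_smul_add_adjoint_le S (by nlinarith [hl.1, hl.2])

/-- `‖M_λ(T)‖⁴ ≤ ‖Q_λ(T)‖² + 4(λ-λ²)²ω(T*T^D)² + 2(λ-λ²)ω(Q_λ(T)T*T^D + T*T^D Q_λ(T))`
where `Q_λ(T) = λ²|T|² + (1-λ)²|T^D|²` (note `|T|² = T*T` and `|T^D|² = (T^D)*T^D`). -/
theorem stmt10 {H : Type*} [NormedAddCommGroup H] [InnerProductSpace ℂ H] [CompleteSpace H]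
    (T U R Q : H →L[ℂ] H)
    (hRpos : R.IsPositive) (hRsq : R * R = adjoint T * T)
    (hUpar : U * adjoint U * U = U)
    (hker : LinearMap.ker (U : H →ₗ[ℂ] H) = LinearMap.ker (T : H →ₗ[ℂ] H))
    (hTUR : T = U * R)
    (l : ℝ) (hl : l ∈ Set.Icc (0 : ℝ) 1)
    (hQ : Q = ((l : ℂ) ^ 2) • (adjoint T * T) +
      (((1 : ℂ) - (l : ℂ)) ^ 2) • (adjoint (R * U) * (R * U))) :
    ‖(l : ℂ) • T + ((1 : ℂ) - (l : ℂ)) • (R * U)‖ ^ 4 ≤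
      ‖Q‖ ^ 2 + 4 * (l - l ^ 2) ^ 2 * numericalRadius (adjoint T * (R * U)) ^ 2 +
        2 * (l - l ^ 2) *
          numericalRadius (Q * (adjoint T * (R * U)) + (adjoint T * (R * U)) * Q) :=
  stmt10_general T U R Q l hl hQ
end
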